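/- Let A, B be real n×n matrices, ψ > 0, and suppose there exist symmetric positive definite matrices P, S such that [[AᵀP + PA + ψP, PB], [BᵀP, -S]] ⪯ 0. Then every solution of ζ' = Aζ + Bd with bounded continuous input d satisfies ‖ζ(t)‖ ≤ (2 λ_max(P)/λ_min(P))^{1/2} e^{-ψt/2} ‖ζ(0)‖ + (2 λ_max(S)/(ψ λ_min(P)))^{1/2} · sup_{τ∈[0,t]} ‖d(τ)‖ for all t ≥ 0. -/

import Mathlib

/-!
`V x = ⟪x, P x⟫` is an ISS-Lyapunov function. Testing the linear matrix inequality with the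
vector `(ζ, d)` gives `V' + ψ V ≤ ⟪d, S d⟫ ≤ λ_max(S) ‖d‖²` along solutions, so Grönwall's
inequality yields `V (ζ t) ≤ e^{-ψt} V (ζ 0) + λ_max(S) sup ‖d‖² / ψ`. The Rayleigh bounds
`λ_min(P) ‖x‖² ≤ V x ≤ λ_max(P) ‖x‖²` turn this into the estimate, via `√(a + b) ≤ √(2a) + √(2b)`.
-/

open Matrix Real Set
open scoped RealInnerProductSpace

namespace Matrix.IsHermitian

variable {ι : Type*} [Fintype ι] [DecidableEq ι] {M : Matrix ι ι ℝ} (hM : M.IsHermitian)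
include hM

lemma inner_toEuclideanLin_self_eq_sum (x : EuclideanSpace ℝ ι) :
    ⟪x, toEuclideanLin M x⟫ = ∑ i, hM.eigenvalues i * ⟪hM.eigenvectorBasis i, x⟫ ^ 2 := by
  rw [← hM.eigenvectorBasis.sum_inner_mul_inner x]
  refine Finset.sum_congr rfl fun i _ => ?_
  have hMv :
      toEuclideanLin M (hM.eigenvectorBasis i) = hM.eigenvalues i • hM.eigenvectorBasis i :=
    congrArg (WithLp.toLp 2) (hM.mulVec_eigenvectorBasis i)
  rw [← (isSymmetric_toEuclideanLin_iff.2 hM) _ x, hMv, real_inner_smul_left, real_inner_comm x]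
  ring

lemma iInf_eigenvalues_mul_norm_sq_le (x : EuclideanSpace ℝ ι) :
    (⨅ i, hM.eigenvalues i) * ‖x‖ ^ 2 ≤ ⟪x, toEuclideanLin M x⟫ := by
  rw [hM.inner_toEuclideanLin_self_eq_sum, ← hM.eigenvectorBasis.sum_sq_inner_right,
    Finset.mul_sum]
  gcongr with i
  exact ciInf_le (Finite.bddBelow (finite_range _)) i

lemma inner_le_iSup_eigenvalues_mul_norm_sq (x : EuclideanSpace ℝ ι) :
    ⟪x, toEuclideanLin M x⟫ ≤ (⨆ i, hM.eigenvalues i) * ‖x‖ ^ 2 := by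
  rw [hM.inner_toEuclideanLin_self_eq_sum, ← hM.eigenvectorBasis.sum_sq_inner_right,
    Finset.mul_sum]
  gcongr with i
  exact le_ciSup (Finite.bddAbove (finite_range _)) i

end Matrix.IsHermitian

lemma Matrix.PosDef.iInf_eigenvalues_pos {ι : Type*} [Fintype ι] [DecidableEq ι] [Nonempty ι]
    {M : Matrix ι ι ℝ} (hM : M.PosDef) : 0 < ⨅ i, hM.1.eigenvalues i := by
  obtain ⟨i, hi⟩ := exists_eq_ciInf_of_finite (f := hM.1.eigenvalues)
  exact hi ▸ hM.eigenvalues_pos i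

lemma Matrix.PosSemidef.iSup_eigenvalues_nonneg {ι : Type*} [Fintype ι] [DecidableEq ι]
    {M : Matrix ι ι ℝ} (hM : M.PosSemidef) : 0 ≤ ⨆ i, hM.1.eigenvalues i :=
  Real.iSup_nonneg hM.eigenvalues_nonneg

lemma Matrix.dotProduct_le_of_posSemidef_neg_fromBlocks {m k : Type*} [Fintype m] [Fintype k]
    {Q : Matrix m m ℝ} {C : Matrix m k ℝ} {D : Matrix k m ℝ} {S : Matrix k k ℝ}
    (h : (-fromBlocks Q C D (-S)).PosSemidef) (x : m → ℝ) (u : k → ℝ) :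
    x ⬝ᵥ Q *ᵥ x + x ⬝ᵥ C *ᵥ u + u ⬝ᵥ D *ᵥ x ≤ u ⬝ᵥ S *ᵥ u := by
  have h := h.dotProduct_mulVec_nonneg (Sum.elim x u)
  simp only [neg_mulVec, dotProduct_neg, star_trivial, fromBlocks_mulVec,
    sumElim_dotProduct_sumElim, Sum.elim_comp_inl, Sum.elim_comp_inr, dotProduct_add] at h
  linarith

lemma Matrix.dotProduct_transpose_mul_mulVec {m k : Type*} [Fintype m] [Fintype k]
    (A : Matrix m k ℝ) (P : Matrix m m ℝ) (v : k → ℝ) (x : m → ℝ) :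
    v ⬝ᵥ (Aᵀ * P) *ᵥ x = (A *ᵥ v) ⬝ᵥ P *ᵥ x := by
  rw [← mulVec_mulVec, dotProduct_mulVec, vecMul_transpose]

lemma inner_le_of_posSemidef_neg_fromBlocks {ι : Type*} [Fintype ι] [DecidableEq ι]
    {A B P S : Matrix ι ι ℝ} {ψ : ℝ}
    (hLMI : (-(fromBlocks (Aᵀ * P + P * A + ψ • P) (P * B) (Bᵀ * P) (-S))).PosSemidef)
    (z u : EuclideanSpace ℝ ι) :
    ⟪z, toEuclideanLin P (toEuclideanLin A z + toEuclideanLin B u)⟫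
      + ⟪toEuclideanLin A z + toEuclideanLin B u, toEuclideanLin P z⟫
      + ψ * ⟪z, toEuclideanLin P z⟫ ≤ ⟪u, toEuclideanLin S u⟫ := by
  have h := dotProduct_le_of_posSemidef_neg_fromBlocks hLMI z.ofLp u.ofLp
  set x := z.ofLp
  set v := u.ofLp
  rw [add_mulVec, add_mulVec, dotProduct_add, dotProduct_add, dotProduct_transpose_mul_mulVec,
    dotProduct_transpose_mul_mulVec, smul_mulVec, dotProduct_smul, smul_eq_mul,
    ← mulVec_mulVec, ← mulVec_mulVec] at h
  -- on `EuclideanSpace ℝ ι`, `⟪a, b⟫` is definitionally `b.ofLp ⬝ᵥ a.ofLp`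
  change (P *ᵥ (A *ᵥ x + B *ᵥ v)) ⬝ᵥ x + (P *ᵥ x) ⬝ᵥ (A *ᵥ x + B *ᵥ v)
    + ψ * ((P *ᵥ x) ⬝ᵥ x) ≤ (S *ᵥ v) ⬝ᵥ v
  simp only [mulVec_add, add_dotProduct, dotProduct_add]
  simp only [dotProduct_comm _ x, dotProduct_comm _ v, dotProduct_comm (P *ᵥ x)] at h ⊢
  linarith

lemma le_exp_mul_add_div_of_deriv_add_mul_le {V V' : ℝ → ℝ} {ψ c t : ℝ} (hψ : 0 < ψ)
    (hc : 0 ≤ c) (ht : 0 ≤ t) (hV : ∀ τ, HasDerivAt V (V' τ) τ)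
    (hbound : ∀ τ ∈ Ico 0 t, V' τ + ψ * V τ ≤ c) :
    V t ≤ exp (-ψ * t) * V 0 + c / ψ := by
  have hgron := le_gronwallBound_of_liminf_deriv_right_le (K := -ψ) (ε := c)
    (fun τ _ => (hV τ).continuousAt.continuousWithinAt)
    (fun τ _ _ hr => (hV τ).hasDerivWithinAt.liminf_right_slope_le hr) le_rfl
    (fun τ hτ => by linarith [hbound τ hτ]) t ⟨ht, le_rfl⟩
  rw [gronwallBound_of_K_ne_0 (neg_ne_zero.2 hψ.ne'), sub_zero] at hgron
  have : c / -ψ * (exp (-ψ * t) - 1) ≤ c / ψ := by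
    rw [div_neg, neg_mul, ← mul_neg, neg_sub]
    exact mul_le_of_le_one_right (div_nonneg hc hψ.le) (by linarith [exp_pos (-ψ * t)])
  linarith

lemma inner_toEuclideanLin_le_of_posSemidef_neg_fromBlocks {ι : Type*} [Fintype ι]
    [DecidableEq ι]
    {A B P S : Matrix ι ι ℝ} {ψ : ℝ} (hψ : 0 < ψ) (hS : S.PosSemidef)
    (hLMI : (-(fromBlocks (Aᵀ * P + P * A + ψ • P) (P * B) (Bᵀ * P) (-S))).PosSemidef)
    {ζ d : ℝ → EuclideanSpace ℝ ι}
    (hζ : ∀ t, HasDerivAt ζ (toEuclideanLin A (ζ t) + toEuclideanLin B (d t)) t)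
    {t M : ℝ} (ht : 0 ≤ t) (hdM : ∀ τ ∈ Icc 0 t, ‖d τ‖ ≤ M) :
    ⟪ζ t, toEuclideanLin P (ζ t)⟫ ≤
      exp (-ψ * t) * ⟪ζ 0, toEuclideanLin P (ζ 0)⟫ + (⨆ i, hS.1.eigenvalues i) * M ^ 2 / ψ := by
  have hS₀ := hS.iSup_eigenvalues_nonneg
  have hPζ (τ : ℝ) : HasDerivAt (fun τ => toEuclideanLin P (ζ τ))
      (toEuclideanLin P (toEuclideanLin A (ζ τ) + toEuclideanLin B (d τ))) τ :=
    (toEuclideanLin P).toContinuousLinearMap.hasFDerivAt.comp_hasDerivAt τ (hζ τ)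
  refine le_exp_mul_add_div_of_deriv_add_mul_le hψ (by positivity) ht
    (fun τ => (hζ τ).inner ℝ (hPζ τ)) fun τ hτ => ?_
  have hd : ‖d τ‖ ^ 2 ≤ M ^ 2 :=
    pow_le_pow_left₀ (norm_nonneg _) (hdM τ (Ico_subset_Icc_self hτ)) 2
  calc _ ≤ ⟪d τ, toEuclideanLin S (d τ)⟫ := inner_le_of_posSemidef_neg_fromBlocks hLMI _ _
    _ ≤ (⨆ i, hS.1.eigenvalues i) * ‖d τ‖ ^ 2 := hS.1.inner_le_iSup_eigenvalues_mul_norm_sq _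
    _ ≤ _ := by gcongr

lemma le_sqrt_mul_exp_add_sqrt_mul {x y m μ L s ψ t : ℝ} (hμ : 0 < μ) (hψ : 0 < ψ)
    (hL : 0 ≤ L) (hs : 0 ≤ s) (hy : 0 ≤ y) (hm : 0 ≤ m)
    (h : μ * x ^ 2 ≤ exp (-ψ * t) * (L * y ^ 2) + s * m ^ 2 / ψ) :
    x ≤ √(2 * L / μ) * exp (-ψ * t / 2) * y + √(2 * s / (ψ * μ)) * m := by
  set p := √(2 * L / μ) * exp (-ψ * t / 2) * y
  set q := √(2 * s / (ψ * μ)) * m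
  have hp : p ^ 2 = 2 * (exp (-ψ * t) * (L * y ^ 2)) / μ := by
    rw [mul_pow, mul_pow, sq_sqrt (by positivity), ← exp_nat_mul]
    field_simp
    ring_nf
  have hq : q ^ 2 = 2 * (s * m ^ 2 / ψ) / μ := by
    rw [mul_pow, sq_sqrt (by positivity)]
    field_simp
  have h2 : 2 * x ^ 2 ≤ p ^ 2 + q ^ 2 := by
    rw [hp, hq, ← add_div, le_div_iff₀ hμ]
    linarith
  have hp0 : 0 ≤ p := by positivity
  have hq0 : 0 ≤ q := by positivity
  nlinarith

theorem stmt3_general {n : ℕ} [NeZero n] (A B P S : Matrix (Fin n) (Fin n) ℝ) (ψ : ℝ) (hψ : 0 < ψ)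
    (hP : P.PosDef) (hS : S.PosDef)
    (hLMI : (-(Matrix.fromBlocks (Aᵀ * P + P * A + ψ • P) (P * B) (Bᵀ * P) (-S))).PosSemidef)
    (ζ d : ℝ → EuclideanSpace ℝ (Fin n)) (hbd : ∃ Cb, ∀ t, ‖d t‖ ≤ Cb)
    (hζ : ∀ t, HasDerivAt ζ (Matrix.toEuclideanLin A (ζ t) + Matrix.toEuclideanLin B (d t)) t) :
    ∀ t ≥ 0, ‖ζ t‖ ≤
      Real.sqrt (2 * (⨆ i, hP.1.eigenvalues i) / (⨅ i, hP.1.eigenvalues i)) *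
        Real.exp (-ψ * t / 2) * ‖ζ 0‖
      + Real.sqrt (2 * (⨆ i, hS.1.eigenvalues i) / (ψ * (⨅ i, hP.1.eigenvalues i)))
        * sSup ((fun τ => ‖d τ‖) '' Set.Icc 0 t) := by
  intro t ht
  obtain ⟨Cb, hCb⟩ := hbd
  have hbdd : BddAbove ((fun τ => ‖d τ‖) '' Icc 0 t) :=
    ⟨Cb, by rintro _ ⟨τ, -, rfl⟩; exact hCb τ⟩
  have hdM (τ : ℝ) (hτ : τ ∈ Icc 0 t) : ‖d τ‖ ≤ sSup ((fun τ => ‖d τ‖) '' Icc 0 t) :=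
    le_csSup hbdd ⟨τ, hτ, rfl⟩
  refine le_sqrt_mul_exp_add_sqrt_mul hP.iInf_eigenvalues_pos hψ
    hP.posSemidef.iSup_eigenvalues_nonneg hS.posSemidef.iSup_eigenvalues_nonneg
    (norm_nonneg _) ((norm_nonneg _).trans (hdM 0 ⟨le_rfl, ht⟩)) ?_
  calc _ ≤ ⟪ζ t, toEuclideanLin P (ζ t)⟫ := hP.1.iInf_eigenvalues_mul_norm_sq_le _
    _ ≤ _ := inner_toEuclideanLin_le_of_posSemidef_neg_fromBlocks hψ hS.posSemidef hLMI hζ ht hdM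
    _ ≤ _ := by gcongr; exact hP.1.inner_le_iSup_eigenvalues_mul_norm_sq _

theorem stmt3 {n : ℕ} [NeZero n] (A B P S : Matrix (Fin n) (Fin n) ℝ) (ψ : ℝ) (hψ : 0 < ψ)
    (hP : P.PosDef) (hS : S.PosDef)
    (hLMI : (-(Matrix.fromBlocks (Aᵀ * P + P * A + ψ • P) (P * B) (Bᵀ * P) (-S))).PosSemidef)
    (ζ d : ℝ → EuclideanSpace ℝ (Fin n)) (hdc : Continuous d) (hbd : ∃ Cb, ∀ t, ‖d t‖ ≤ Cb)
    (hζ : ∀ t, HasDerivAt ζ (Matrix.toEuclideanLin A (ζ t) + Matrix.toEuclideanLin B (d t)) t) :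
    ∀ t ≥ 0, ‖ζ t‖ ≤
      Real.sqrt (2 * (⨆ i, hP.1.eigenvalues i) / (⨅ i, hP.1.eigenvalues i)) *
        Real.exp (-ψ * t / 2) * ‖ζ 0‖
      + Real.sqrt (2 * (⨆ i, hS.1.eigenvalues i) / (ψ * (⨅ i, hP.1.eigenvalues i)))
        * sSup ((fun τ => ‖d τ‖) '' Set.Icc 0 t) :=
  stmt3_general A B P S ψ hψ hP hS hLMI ζ d hbd hζ
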